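/- Let N ≥ 3 and p > 1. Assume condition (K0), condition (f0), μ ≥ 0, and θ < N - 2 (which holds in particular when p > p_S(α)). Let u ∈ C²((0,r_1)) be a positive solution of u'' + ((N-1)/r)u' + K(r)u^p + μ f(r) = 0 on (0, r_1) for some r_1 > 0 with lim_{r→0+} u(r) = ∞. Then limsup_{r→0+} r^θ u(r) > 0. -/

import Mathlib

open Real Filter Set MeasureTheory Topology

noncomputable section

/-- The critical Sobolev exponent `p_S(α) = (N+2+2α)/(N-2)`. -/
def pS (N : ℕ) (α : ℝ) : ℝ := ((N : ℝ) + 2 + 2 * α) / ((N : ℝ) - 2)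

/-- The condition `p < p_JL(α)` where `p_JL` is the Joseph–Lundgren exponent
(`p_JL(α) = ∞` if `N ≤ 10 + 4α`). -/
def ltPJL (N : ℕ) (α p : ℝ) : Prop :=
  (N : ℝ) ≤ 10 + 4 * α ∨
    (10 + 4 * α < (N : ℝ) ∧
      p < 1 + 2 * (2 + α) / ((N : ℝ) - 4 - α - Real.sqrt ((2 + α) * (2 * (N : ℝ) - 2 + α))))

/-- `θ = (2+α)/(p-1)`. -/
def θconst (p α : ℝ) : ℝ := (2 + α) / (p - 1)

/-- `γ = (θ(N-2-θ)/k0)^{1/(p-1)}`. -/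
def γconst (N : ℕ) (p α k0 : ℝ) : ℝ :=
  (θconst p α * ((N : ℝ) - 2 - θconst p α) / k0) ^ (1 / (p - 1))

/-- Condition (K0): `K` positive continuous on `(0,∞)`, `α > -2`, `k0 > 0`,
`r^{-α} K(r) → k0` as `r → 0+`. -/
def CondK0 (K : ℝ → ℝ) (α k0 : ℝ) : Prop :=
  (∀ r : ℝ, 0 < r → 0 < K r) ∧ ContinuousOn K (Ioi 0) ∧ -2 < α ∧ 0 < k0 ∧
    Tendsto (fun r : ℝ => r ^ (-α) * K r) (𝓝[>] 0) (𝓝 k0)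

/-- Condition (f0): `f` nonnegative continuous on `(0,∞)`, not identically zero,
with `f(r) ≤ C r^ν` near `0` for some `ν > -2`. -/
def CondF0 (f : ℝ → ℝ) : Prop :=
  ContinuousOn f (Ioi 0) ∧ (∀ r : ℝ, 0 < r → 0 ≤ f r) ∧ (∃ r : ℝ, 0 < r ∧ f r ≠ 0) ∧
    ∃ ν : ℝ, -2 < ν ∧ ∃ C : ℝ, 0 < C ∧ ∃ ρ0 : ℝ, 0 < ρ0 ∧
      ∀ r : ℝ, 0 < r → r < ρ0 → f r ≤ C * r ^ ν

/-- Condition (K∞): `β > -2`, `k∞ > 0`, `r^{-β}K(r) → k∞` as `r → ∞`. -/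
def CondKinf (K : ℝ → ℝ) (β kinf : ℝ) : Prop :=
  -2 < β ∧ 0 < kinf ∧ Tendsto (fun r : ℝ => r ^ (-β) * K r) atTop (𝓝 kinf)

/-- Condition (f∞): `f(r) ≤ C r^{-q}` for large `r`, for some `q > N`. -/
def CondFinf (N : ℕ) (f : ℝ → ℝ) : Prop :=
  ∃ q : ℝ, (N : ℝ) < q ∧ ∃ C : ℝ, 0 < C ∧ ∃ R0 : ℝ, 0 < R0 ∧
    ∀ r : ℝ, R0 < r → f r ≤ C * r ^ (-q)

/-- `u` is a positive `C²` solution of `u'' + (N-1)/r u' + K u^p + μ f = 0` on `s`. -/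
def SolOn (N : ℕ) (p μ : ℝ) (K f u : ℝ → ℝ) (s : Set ℝ) : Prop :=
  ContDiffOn ℝ 2 u s ∧ (∀ r ∈ s, 0 < u r) ∧
    ∀ r ∈ s, deriv (deriv u) r + ((N : ℝ) - 1) / r * deriv u r + K r * u r ^ p + μ * f r = 0

/-- Bounded solution of (E): solution on `(0,∞)` with a finite limit at `0+`. -/
def BoundedSol (N : ℕ) (p μ : ℝ) (K f u : ℝ → ℝ) : Prop :=
  SolOn N p μ K f u (Ioi 0) ∧ ∃ l : ℝ, Tendsto u (𝓝[>] 0) (𝓝 l)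

/-- Singular solution of (E): solution on `(0,∞)` with `u(r) → ∞` as `r → 0+`. -/
def SingularSol (N : ℕ) (p μ : ℝ) (K f u : ℝ → ℝ) : Prop :=
  SolOn N p μ K f u (Ioi 0) ∧ Tendsto u (𝓝[>] 0) atTop

/-- `‖u‖_∞ = sup_{r>0} u(r)`. -/
def supNorm (u : ℝ → ℝ) : ℝ := ⨆ r : Ioi (0 : ℝ), u r.1

/-- Fast decay: `limsup_{r→∞} r^{N-2} u(r) < ∞`. -/
def FastDecay (N : ℕ) (u : ℝ → ℝ) : Prop :=
  ∃ M : ℝ, ∀ᶠ r in atTop, r ^ ((N : ℝ) - 2) * u r ≤ M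

/-- Slow decay: `limsup_{r→∞} r^{N-2} u(r) = ∞`. -/
def SlowDecay (N : ℕ) (u : ℝ → ℝ) : Prop :=
  ∀ M : ℝ, ∃ᶠ r in atTop, M < r ^ ((N : ℝ) - 2) * u r

/-!
Suppose `r^θ u(r) → 0`. In terms of the flux `w = r^{N-1} u'` the equation reads
`w' = -r^{N-1} (K u^p + μ f)`.

If `w ≤ -ε` near `0`, then `u' ≤ -ε r^{1-N}` integrates to `u(r) ≳ r^{2-N}`, which beats
`r^{-θ}` because `θ < N - 2`.

Otherwise `w` comes back arbitrarily close to `0`, and a bound `u ≤ a + b r^{-θ}` can be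
integrated twice, by comparison with explicit radial power solutions, into
`u ≤ D + A a^p + B b^p r^{-θ}`. Starting from `u ≤ c r^{-θ}` with `c` small, iterating keeps the
constant term at `2D` and halves the coefficient of `r^{-θ}`, so `u` stays bounded near `0`,
contradicting `u → ∞`.
-/

theorem eventually_forall_Ioc {P : ℝ → Prop} {a : ℝ} (h : ∀ᶠ t in 𝓝[>] a, P t) :
    ∀ᶠ s in 𝓝[>] a, ∀ t ∈ Ioc a s, P t := by
  obtain ⟨b, hab, hb⟩ := mem_nhdsGT_iff_exists_Ioc_subset.1 h
  filter_upwards [Ioc_mem_nhdsGT hab] with s hs t ht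
  exact hb ⟨ht.1, ht.2.trans hs.2⟩

theorem Real.rpow_add_le_mul_rpow_add_rpow {a b p : ℝ} (ha : 0 ≤ a) (hb : 0 ≤ b) (hp : 1 ≤ p) :
    (a + b) ^ p ≤ 2 ^ (p - 1) * (a ^ p + b ^ p) := by
  have := NNReal.rpow_add_le_mul_rpow_add_rpow ⟨a, ha⟩ ⟨b, hb⟩ hp
  exact_mod_cast this

theorem monotoneOn_Ioc_of_hasDerivAt {F F' : ℝ → ℝ} {a s : ℝ}
    (hF : ∀ t ∈ Ioc a s, HasDerivAt F (F' t) t) (hF' : ∀ t ∈ Ioc a s, 0 ≤ F' t) :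
    MonotoneOn F (Ioc a s) := by
  refine monotoneOn_of_hasDerivWithinAt_nonneg (convex_Ioc a s)
    (fun t ht => (hF t ht).continuousAt.continuousWithinAt) (fun t ht => ?_)
    (fun t ht => hF' t (interior_subset ht))
  exact (hF t (interior_subset ht)).hasDerivWithinAt

theorem tendsto_rpow_nhdsGT_zero {y : ℝ} (hy : 0 < y) :
    Tendsto (fun x : ℝ => x ^ y) (𝓝[>] 0) (𝓝 0) := by
  have := (continuousAt_rpow_const 0 y (Or.inr hy.le)).tendsto
  rw [zero_rpow hy.ne'] at this
  exact this.mono_left nhdsWithin_le_nhds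

theorem eventually_le_mul_rpow_of_tendsto {K : ℝ → ℝ} {α k0 k : ℝ}
    (hK : Tendsto (fun r => r ^ (-α) * K r) (𝓝[>] 0) (𝓝 k0)) (hk : k0 < k) :
    ∀ᶠ t in 𝓝[>] 0, K t ≤ k * t ^ α := by
  filter_upwards [hK.eventually (eventually_le_nhds hk), self_mem_nhdsWithin] with t ht ht0
  have := mul_le_mul_of_nonneg_left ht (rpow_nonneg (le_of_lt ht0) α)
  rwa [← mul_assoc, ← rpow_add ht0, add_neg_cancel, rpow_zero, one_mul, mul_comm] at this

theorem monotoneOn_of_hasDerivAt_radialFlux_nonneg {n s : ℝ} {v v' F' : ℝ → ℝ}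
    (hv : ∀ t ∈ Ioc 0 s, HasDerivAt v (v' t) t)
    (hF : ∀ t ∈ Ioc 0 s, HasDerivAt (fun t => t ^ (n - 1) * v' t) (F' t) t)
    (hF' : ∀ t ∈ Ioc 0 s, 0 ≤ F' t)
    (hF0 : ∀ ε > 0, ∃ᶠ t in 𝓝[>] 0, -ε ≤ t ^ (n - 1) * v' t) :
    MonotoneOn v (Ioc 0 s) := by
  have hFmono := monotoneOn_Ioc_of_hasDerivAt hF hF'
  refine monotoneOn_Ioc_of_hasDerivAt hv fun t ht => ?_
  have hflux : 0 ≤ t ^ (n - 1) * v' t := by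
    refine le_of_forall_pos_le_add fun ε hε => ?_
    obtain ⟨t', hε', ht'⟩ := ((hF0 ε hε).and_eventually (Ioc_mem_nhdsGT ht.1)).exists
    have := hFmono ⟨ht'.1, ht'.2.trans ht.2⟩ ht ht'.2
    linarith
  exact nonneg_of_mul_nonneg_right hflux (rpow_pos_of_pos ht.1 _)

theorem tendsto_rpow_mul_atTop_of_radialFlux_le {n θ ε : ℝ} {u u' : ℝ → ℝ} (hθ : 0 < θ)
    (hθn : θ < n - 2) (hε : 0 < ε)
    (hu : ∀ᶠ t in 𝓝[>] 0, HasDerivAt u (u' t) t ∧ t ^ (n - 1) * u' t ≤ -ε) :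
    Tendsto (fun r => r ^ θ * u r) (𝓝[>] 0) atTop := by
  obtain ⟨s, hs, hsub⟩ := mem_nhdsGT_iff_exists_Ioc_subset.1 hu
  set κ := ε / (n - 2)
  -- `κ t ^ (2 - n)` is the radial fundamental solution with flux `-ε`.
  set G : ℝ → ℝ := fun t => κ * t ^ (2 - n) - u t
  have hG : MonotoneOn G (Ioc 0 s) := by
    refine monotoneOn_Ioc_of_hasDerivAt
      (fun t ht => ((hasDerivAt_rpow_const (Or.inl ht.1.ne')).const_mul κ).sub (hsub ht).1)
      fun t ht => ?_
    have ht0 : 0 < t := ht.1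
    have hflux := mul_le_mul_of_nonneg_left (hsub ht).2 (rpow_nonneg ht0.le (1 - n))
    rw [← mul_assoc, ← rpow_add ht0, show 1 - n + (n - 1) = 0 by ring, rpow_zero, one_mul]
      at hflux
    have hκ : κ * (2 - n) = -ε := by
      rw [div_mul_eq_mul_div, div_eq_iff (by linarith)]; ring
    have : κ * ((2 - n) * t ^ (2 - n - 1)) = -ε * t ^ (1 - n) := by
      rw [← mul_assoc, hκ, show 2 - n - 1 = 1 - n by ring]
    linarith
  have hlow : ∀ᶠ r in 𝓝[>] 0, κ * r ^ (θ + 2 - n) - G s * r ^ θ ≤ r ^ θ * u r := by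
    filter_upwards [Ioc_mem_nhdsGT hs] with r hr
    have := mul_le_mul_of_nonneg_left (hG hr ⟨hs, le_rfl⟩ hr.2) (rpow_nonneg hr.1.le θ)
    rw [show θ + 2 - n = θ + (2 - n) by ring, rpow_add hr.1]
    simp only [G] at this ⊢
    linarith
  refine tendsto_atTop_mono' _ hlow (Tendsto.atTop_add (C := 0) ?_ ?_)
  · exact (tendsto_rpow_neg_nhdsGT_zero (by linarith)).const_mul_atTop (div_pos hε (by linarith))
  · simpa using ((tendsto_rpow_nhdsGT_zero hθ).const_mul (G s)).neg

/-- The radial solution of `(t^{n-1} ψ')' = t^{n-1} t^γ` in dimension `n`. -/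
def radialPower (n γ t : ℝ) : ℝ := t ^ (γ + 2) / ((n + γ) * (γ + 2))

theorem hasDerivAt_radialPower {n γ t : ℝ} (hγ : γ + 2 ≠ 0) (ht : 0 < t) :
    HasDerivAt (radialPower n γ) (t ^ (γ + 1) / (n + γ)) t := by
  refine ((hasDerivAt_rpow_const (p := γ + 2) (Or.inl ht.ne')).div_const _).congr_deriv ?_
  rw [show γ + 2 - 1 = γ + 1 by ring]
  by_cases hnγ : n + γ = 0
  · simp [hnγ]
  · field_simp

theorem hasDerivAt_radialPower_flux {n γ t : ℝ} (hnγ : n + γ ≠ 0) (ht : 0 < t) :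
    HasDerivAt (fun t => t ^ (n - 1) * (t ^ (γ + 1) / (n + γ))) (t ^ (n - 1) * t ^ γ) t := by
  have hfun : ∀ x > 0, x ^ (n - 1) * (x ^ (γ + 1) / (n + γ)) = x ^ (n + γ) / (n + γ) := by
    intro x hx
    rw [mul_div_assoc', ← rpow_add hx]; ring_nf
  refine (((hasDerivAt_rpow_const (p := n + γ) (Or.inl ht.ne')).div_const _).congr_of_eventuallyEq
    ((eventually_gt_nhds ht).mono hfun)).congr_deriv ?_
  rw [← rpow_add ht]; field_simp; ring_nf

theorem radialPower_nonneg {n γ t : ℝ} (hnγ : 0 < n + γ) (hγ : 0 < γ + 2) (ht : 0 ≤ t) :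
    0 ≤ radialPower n γ t := by
  unfold radialPower; positivity

theorem radialPower_neg_two_sub {n θ t : ℝ} :
    radialPower n (-2 - θ) t = -(t ^ (-θ) / ((n - 2 - θ) * θ)) := by
  unfold radialPower
  rw [show -2 - θ + 2 = -θ by ring, show n + (-2 - θ) = n - 2 - θ by ring, mul_neg, div_neg]

theorem mul_rpow_le_of_le_add_mul_rpow {t x κ k a b α θ p : ℝ} (ht : 0 < t) (hp : 1 ≤ p)
    (hθ : θ * (p - 1) = 2 + α) (hκ0 : 0 ≤ κ) (hκ : κ ≤ k * t ^ α) (hx0 : 0 ≤ x)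
    (hx : x ≤ a + b * t ^ (-θ)) (ha : 0 ≤ a) (hb : 0 ≤ b) :
    κ * x ^ p ≤ k * 2 ^ (p - 1) * a ^ p * t ^ α + k * 2 ^ (p - 1) * b ^ p * t ^ (-2 - θ) := by
  have hbt : 0 ≤ b * t ^ (-θ) := by positivity
  have hsplit : t ^ (-2 - θ) = t ^ α * t ^ (-θ * p) := by
    rw [← rpow_add ht]; congr 1; linear_combination hθ
  calc κ * x ^ p ≤ k * t ^ α * (2 ^ (p - 1) * (a ^ p + (b * t ^ (-θ)) ^ p)) :=
        mul_le_mul hκ ((rpow_le_rpow hx0 hx (by linarith)).trans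
          (rpow_add_le_mul_rpow_add_rpow ha hbt hp)) (by positivity) (hκ0.trans hκ)
    _ = _ := by
        rw [mul_rpow hb (rpow_nonneg ht.le _), ← rpow_mul ht.le, hsplit]; ring

theorem le_two_mul_of_forall_le_add {S : Set ℝ} {v φ : ℝ → ℝ} {p A B D c : ℝ} (hp : 1 ≤ p)
    (hφ : ∀ t ∈ S, 0 ≤ φ t) (hD : 0 ≤ D) (hc : 0 ≤ c) (hA : A * (2 * D) ^ p ≤ D)
    (hB : 0 ≤ B) (hBc : B * c ^ (p - 1) ≤ 1 / 2) (h0 : ∀ t ∈ S, v t ≤ c * φ t)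
    (hstep : ∀ a b, 0 ≤ a → 0 ≤ b → (∀ t ∈ S, v t ≤ a + b * φ t) →
      ∀ t ∈ S, v t ≤ D + A * a ^ p + B * b ^ p * φ t) :
    ∀ t ∈ S, v t ≤ 2 * D := by
  have hind : ∀ n : ℕ, ∀ t ∈ S, v t ≤ 2 * D + c * (1 / 2) ^ n * φ t := by
    intro n
    induction n with
    | zero => intro t ht; linarith [h0 t ht]
    | succ n ih =>
      set b := c * (1 / 2 : ℝ) ^ n
      have hb : 0 ≤ b := by positivity
      have hbp : B * b ^ p ≤ c * (1 / 2) ^ (n + 1) :=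
        calc B * b ^ p = B * b ^ (p - 1) * b := by
              rw [mul_assoc, ← rpow_add_one' hb (by linarith), sub_add_cancel]
          _ ≤ B * c ^ (p - 1) * b := by
              gcongr
              exact mul_le_of_le_one_right hc (pow_le_one₀ (by norm_num) (by norm_num))
          _ ≤ 1 / 2 * b := by gcongr
          _ = c * (1 / 2) ^ (n + 1) := by ring
      intro t ht
      have := hstep (2 * D) b (by positivity) hb ih t ht
      nlinarith [hφ t ht]
  intro t ht
  refine ge_of_tendsto' (x := atTop) ?_ fun n => hind n t ht
  simpa using (((tendsto_pow_atTop_nhds_zero_of_lt_one (r := (1 / 2 : ℝ)) (by norm_num)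
    (by norm_num)).const_mul c).mul_const (φ t)).const_add (2 * D)

def radialFlux (n : ℝ) (u : ℝ → ℝ) (t : ℝ) : ℝ := t ^ (n - 1) * deriv u t

section Solution

variable {N : ℕ} {p μ r1 : ℝ} {K f u : ℝ → ℝ}

theorem SolOn.hasDerivAt (hu : SolOn N p μ K f u (Ioo 0 r1)) {t : ℝ} (ht : t ∈ Ioo 0 r1) :
    HasDerivAt u (deriv u t) t :=
  ((hu.1.differentiableOn (by norm_num)).differentiableAt (isOpen_Ioo.mem_nhds ht)).hasDerivAt

theorem SolOn.hasDerivAt_radialFlux (hu : SolOn N p μ K f u (Ioo 0 r1)) {t : ℝ}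
    (ht : t ∈ Ioo 0 r1) :
    HasDerivAt (radialFlux N u) (-(t ^ ((N : ℝ) - 1) * (K t * u t ^ p + μ * f t))) t := by
  have hu'' : HasDerivAt (deriv u) (deriv (deriv u) t) t :=
    (((hu.1.deriv_of_isOpen (m := 1) isOpen_Ioo (by norm_num)).differentiableOn
      (by norm_num)).differentiableAt (isOpen_Ioo.mem_nhds ht)).hasDerivAt
  refine ((hasDerivAt_rpow_const (p := (N : ℝ) - 1) (Or.inl ht.1.ne')).mul hu'').congr_deriv ?_
  have heq : deriv (deriv u) t
      = -(((N : ℝ) - 1) / t * deriv u t + (K t * u t ^ p + μ * f t)) := by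
    linarith [hu.2.2 t ht]
  rw [heq, show (N : ℝ) - 1 - 1 = (N : ℝ) - 1 + -1 by ring, rpow_add ht.1, rpow_neg_one]
  ring

theorem SolOn.monotoneOn_add_of_source_le (hu : SolOn N p μ K f u (Ioo 0 r1)) {s : ℝ}
    (hs0 : 0 < s) (hs : s < r1) {Φ Φ' h : ℝ → ℝ} (hΦ : ∀ t ∈ Ioc 0 s, HasDerivAt Φ (Φ' t) t)
    (hΦflux : ∀ t ∈ Ioc 0 s,
      HasDerivAt (fun t => t ^ ((N : ℝ) - 1) * Φ' t) (t ^ ((N : ℝ) - 1) * h t) t)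
    (hΦ' : ∀ t ∈ Ioc 0 s, 0 ≤ Φ' t) (hsrc : ∀ t ∈ Ioc 0 s, K t * u t ^ p + μ * f t ≤ h t)
    (hflux : ∀ ε > 0, ∃ᶠ t in 𝓝[>] 0, -ε ≤ radialFlux N u t) :
    MonotoneOn (u + Φ) (Ioc 0 s) := by
  have hIoo : ∀ t ∈ Ioc 0 s, t ∈ Ioo 0 r1 := fun t ht => ⟨ht.1, ht.2.trans_lt hs⟩
  refine monotoneOn_of_hasDerivAt_radialFlux_nonneg (n := N) (v' := fun t => deriv u t + Φ' t)
    (F' := fun t => -(t ^ ((N : ℝ) - 1) * (K t * u t ^ p + μ * f t)) + t ^ ((N : ℝ) - 1) * h t)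
    (fun t ht => (hu.hasDerivAt (hIoo t ht)).add (hΦ t ht))
    (fun t ht => ?_) (fun t ht => ?_) fun ε hε => ?_
  · refine ((hu.hasDerivAt_radialFlux (hIoo t ht)).add (hΦflux t ht)).congr_of_eventuallyEq
      (Eventually.of_forall fun t => ?_)
    simp only [Pi.add_apply, radialFlux, mul_add]
  · have := mul_le_mul_of_nonneg_left (hsrc t ht) (rpow_nonneg ht.1.le ((N : ℝ) - 1))
    linarith
  · refine (hflux ε hε).mp ?_
    filter_upwards [Ioc_mem_nhdsGT hs0] with t ht hwt
    have := mul_nonneg (rpow_nonneg ht.1.le ((N : ℝ) - 1)) (hΦ' t ht)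
    simp only [radialFlux] at hwt
    linarith [mul_add (t ^ ((N : ℝ) - 1)) (deriv u t) (Φ' t)]

theorem SolOn.le_add_rpow_of_le_add_rpow (hu : SolOn N p μ K f u (Ioo 0 r1))
    {s α θ ν k C a b : ℝ} (hs0 : 0 < s) (hs : s < r1) (hp : 1 ≤ p) (hμ : 0 ≤ μ) (hk : 0 ≤ k)
    (hC : 0 ≤ C) (hθ : θ * (p - 1) = 2 + α) (hθ0 : 0 < θ) (hθN : θ < (N : ℝ) - 2)
    (hα : -2 < α) (hν : -2 < ν)
    (hK : ∀ t ∈ Ioc 0 s, 0 ≤ K t ∧ K t ≤ k * t ^ α) (hf : ∀ t ∈ Ioc 0 s, f t ≤ C * t ^ ν)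
    (hflux : ∀ ε > 0, ∃ᶠ t in 𝓝[>] 0, -ε ≤ radialFlux N u t)
    (ha : 0 ≤ a) (hb : 0 ≤ b) (hub : ∀ t ∈ Ioc 0 s, u t ≤ a + b * t ^ (-θ)) :
    ∀ r ∈ Ioc 0 s, u r ≤ (u s + μ * C * radialPower N ν s)
      + k * 2 ^ (p - 1) * radialPower N α s * a ^ p
      + k * 2 ^ (p - 1) / (((N : ℝ) - 2 - θ) * θ) * b ^ p * r ^ (-θ) := by
  set P := k * 2 ^ (p - 1) * a ^ p
  set Q := k * 2 ^ (p - 1) * b ^ p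
  set R := μ * C
  have hP : 0 ≤ P := by positivity
  have hQ : 0 ≤ Q := by positivity
  have hR : 0 ≤ R := by positivity
  -- The radial Laplacian of `Φ` dominates the source bound that `hub` gives.
  set Φ : ℝ → ℝ := fun t => P * radialPower N α t + Q * radialPower N (-2 - θ) t
    + R * radialPower N ν t
  set Φ' : ℝ → ℝ := fun t => P * (t ^ (α + 1) / (N + α))
    + Q * (t ^ (-2 - θ + 1) / (N + (-2 - θ))) + R * (t ^ (ν + 1) / (N + ν))
  have hΦ (t) (ht : t ∈ Ioc 0 s) : HasDerivAt Φ (Φ' t) t :=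
    (((hasDerivAt_radialPower (by linarith) ht.1).const_mul P).add
      ((hasDerivAt_radialPower (by linarith) ht.1).const_mul Q)).add
      ((hasDerivAt_radialPower (by linarith) ht.1).const_mul R)
  have hΦflux (t) (ht : t ∈ Ioc 0 s) : HasDerivAt (fun t => t ^ ((N : ℝ) - 1) * Φ' t)
      (t ^ ((N : ℝ) - 1) * (P * t ^ α + Q * t ^ (-2 - θ) + R * t ^ ν)) t :=
    ((((hasDerivAt_radialPower_flux (n := N) (γ := α) (by linarith) ht.1).const_mul P).add
      ((hasDerivAt_radialPower_flux (n := N) (γ := -2 - θ) (by linarith) ht.1).const_mul Q)).add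
      ((hasDerivAt_radialPower_flux (n := N) (γ := ν) (by linarith) ht.1).const_mul R))
      |>.congr_deriv (by ring)
      |>.congr_of_eventuallyEq (.of_forall fun x => by simp only [Φ', Pi.add_apply]; ring)
  have hΦ' (t) (ht : t ∈ Ioc 0 s) : 0 ≤ Φ' t := by
    have hpow (γ : ℝ) (hγ : 0 < N + γ) : 0 ≤ t ^ (γ + 1) / (N + γ) :=
      div_nonneg (rpow_nonneg ht.1.le _) hγ.le
    exact add_nonneg (add_nonneg (mul_nonneg hP (hpow α (by linarith)))
      (mul_nonneg hQ (hpow _ (by linarith)))) (mul_nonneg hR (hpow ν (by linarith)))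
  have hsrc (t) (ht : t ∈ Ioc 0 s) :
      K t * u t ^ p + μ * f t ≤ P * t ^ α + Q * t ^ (-2 - θ) + R * t ^ ν := by
    have hKu := mul_rpow_le_of_le_add_mul_rpow ht.1 hp hθ (hK t ht).1 (hK t ht).2
      (hu.2.1 t ⟨ht.1, ht.2.trans_lt hs⟩).le (hub t ht) ha hb
    have hμf := mul_le_mul_of_nonneg_left (hf t ht) hμ
    linarith
  have hmono := hu.monotoneOn_add_of_source_le hs0 hs hΦ hΦflux hΦ' hsrc hflux
  intro r hr
  have hΦrs := hmono hr ⟨hs0, le_rfl⟩ hr.2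
  simp only [Pi.add_apply, Φ, radialPower_neg_two_sub] at hΦrs
  have hαr : 0 ≤ P * radialPower N α r :=
    mul_nonneg hP (radialPower_nonneg (by linarith) (by linarith) hr.1.le)
  have hνr : 0 ≤ R * radialPower N ν r :=
    mul_nonneg hR (radialPower_nonneg (by linarith) (by linarith) hr.1.le)
  have hθs : 0 ≤ Q * (s ^ (-θ) / (((N : ℝ) - 2 - θ) * θ)) :=
    mul_nonneg hQ (div_nonneg (rpow_nonneg hs0.le _) (by nlinarith))
  have hθr : Q * (r ^ (-θ) / (((N : ℝ) - 2 - θ) * θ))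
      = k * 2 ^ (p - 1) / (((N : ℝ) - 2 - θ) * θ) * b ^ p * r ^ (-θ) := by
    ring
  linarith

theorem SolOn.le_two_mul_of_rpow_mul_le (hu : SolOn N p μ K f u (Ioo 0 r1))
    {s α θ ν k C c : ℝ} (hs0 : 0 < s) (hs : s < r1) (hp : 1 ≤ p) (hμ : 0 ≤ μ) (hk : 0 ≤ k)
    (hC : 0 ≤ C) (hθ : θ * (p - 1) = 2 + α) (hθ0 : 0 < θ) (hθN : θ < (N : ℝ) - 2)
    (hα : -2 < α) (hν : -2 < ν)
    (hK : ∀ t ∈ Ioc 0 s, 0 ≤ K t ∧ K t ≤ k * t ^ α) (hf : ∀ t ∈ Ioc 0 s, f t ≤ C * t ^ ν)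
    (hflux : ∀ ε > 0, ∃ᶠ t in 𝓝[>] 0, -ε ≤ radialFlux N u t)
    (hc : 0 < c) (hcB : k * 2 ^ (p - 1) / (((N : ℝ) - 2 - θ) * θ) * c ^ (p - 1) ≤ 1 / 2)
    (hcA : k * 2 ^ (p - 1) / ((N + α) * (α + 2)) * 2 ^ p * 2 ^ (p - 1) * c ^ (p - 1) ≤ 1)
    (hus : ∀ t ∈ Ioc 0 s, t ^ θ * u t ≤ c) (hRs : s ^ θ * (μ * C * radialPower N ν s) ≤ c) :
    ∀ t ∈ Ioc 0 s, u t ≤ 2 * (u s + μ * C * radialPower N ν s) := by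
  set D := u s + μ * C * radialPower N ν s
  have hD : 0 < D := add_pos_of_pos_of_nonneg (hu.2.1 s ⟨hs0, hs⟩)
    (mul_nonneg (mul_nonneg hμ hC) (radialPower_nonneg (by linarith) (by linarith) hs0.le))
  have hsD : s ^ θ * D ≤ 2 * c := by
    have := hus s ⟨hs0, le_rfl⟩
    rw [mul_add]; linarith
  -- Since `θ (p - 1) = α + 2`, the left side is `D` times a function of `s^θ D` alone.
  have hA : k * 2 ^ (p - 1) * radialPower N α s * (2 * D) ^ p ≤ D := by
    have hDp : D ^ p = D ^ (p - 1) * D := by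
      rw [← rpow_add_one' hD.le (by linarith), sub_add_cancel]
    have hscale : s ^ (α + 2) * D ^ (p - 1) = (s ^ θ * D) ^ (p - 1) := by
      rw [mul_rpow (rpow_nonneg hs0.le _) hD.le, ← rpow_mul hs0.le, hθ, add_comm]
    have h2c : (s ^ θ * D) ^ (p - 1) ≤ 2 ^ (p - 1) * c ^ (p - 1) := by
      rw [← mul_rpow (by norm_num) hc.le]
      exact rpow_le_rpow (by positivity) hsD (by linarith)
    calc k * 2 ^ (p - 1) * radialPower N α s * (2 * D) ^ p
        = k * 2 ^ (p - 1) / ((N + α) * (α + 2)) * 2 ^ p * (s ^ θ * D) ^ (p - 1) * D := by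
          rw [mul_rpow (by norm_num) hD.le, hDp, ← hscale, radialPower]; ring
      _ ≤ 1 * D := by
          have : 0 ≤ k * 2 ^ (p - 1) / ((N + α) * (α + 2)) :=
            div_nonneg (by positivity) (mul_pos (by linarith) (by linarith)).le
          gcongr
          refine le_trans ?_ hcA
          rw [mul_assoc _ (2 ^ (p - 1)) (c ^ (p - 1))]
          gcongr
      _ = D := one_mul D
  refine le_two_mul_of_forall_le_add (φ := fun t => t ^ (-θ)) hp
    (fun t ht => rpow_nonneg ht.1.le _) hD.le hc.le hA (by positivity) hcB (fun t ht => ?_)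
    fun a b ha hb hub => hu.le_add_rpow_of_le_add_rpow hs0 hs hp hμ hk hC hθ hθ0 hθN hα hν hK hf
      hflux ha hb hub
  have := mul_le_mul_of_nonneg_left (hus t ht) (rpow_nonneg ht.1.le (-θ))
  rwa [← mul_assoc, ← rpow_add ht.1, neg_add_cancel, rpow_zero, one_mul, mul_comm] at this

theorem SolOn.exists_eventually_le_of_radialFlux (hu : SolOn N p μ K f u (Ioo 0 r1))
    {α θ ν k C : ℝ} (hr1 : 0 < r1) (hp : 1 < p) (hμ : 0 ≤ μ) (hk : 0 ≤ k) (hC : 0 ≤ C)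
    (hθ : θ * (p - 1) = 2 + α) (hθ0 : 0 < θ) (hθN : θ < (N : ℝ) - 2) (hα : -2 < α)
    (hν : -2 < ν) (hK : ∀ᶠ t in 𝓝[>] 0, 0 ≤ K t ∧ K t ≤ k * t ^ α)
    (hf : ∀ᶠ t in 𝓝[>] 0, f t ≤ C * t ^ ν)
    (hsmall : ∀ c > 0, ∀ᶠ t in 𝓝[>] 0, t ^ θ * u t ≤ c)
    (hflux : ∀ ε > 0, ∃ᶠ t in 𝓝[>] 0, -ε ≤ radialFlux N u t) :
    ∃ M, ∀ᶠ t in 𝓝[>] 0, u t ≤ M := by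
  have hc0 := tendsto_rpow_nhdsGT_zero (by linarith : 0 < p - 1)
  obtain ⟨c, ⟨hcB, hcA⟩, hc⟩ :=
    ((((hc0.const_mul (k * 2 ^ (p - 1) / (((N : ℝ) - 2 - θ) * θ))).eventually
      (eventually_le_nhds (by norm_num : _ * (0 : ℝ) < 1 / 2))).and
    ((hc0.const_mul (k * 2 ^ (p - 1) / ((N + α) * (α + 2)) * 2 ^ p * 2 ^ (p - 1))).eventually
      (eventually_le_nhds (by norm_num : _ * (0 : ℝ) < 1)))).and self_mem_nhdsWithin).exists
  have hR : Tendsto (fun s => μ * C / ((N + ν) * (ν + 2)) * s ^ (θ + (ν + 2))) (𝓝[>] 0) (𝓝 0) := by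
    simpa using (tendsto_rpow_nhdsGT_zero (by linarith : 0 < θ + (ν + 2))).const_mul
      (μ * C / ((N + ν) * (ν + 2)))
  obtain ⟨s, hsKfu, hRs, hs⟩ := ((eventually_forall_Ioc
    (hK.and (hf.and (hsmall c hc)))).and ((hR.eventually (eventually_le_nhds hc)).and
    (Ioo_mem_nhdsGT hr1))).exists
  have hRs' : s ^ θ * (μ * C * radialPower N ν s) ≤ c := by
    rwa [radialPower, show s ^ θ * (μ * C * (s ^ (ν + 2) / ((N + ν) * (ν + 2))))
      = μ * C / ((N + ν) * (ν + 2)) * s ^ (θ + (ν + 2)) by rw [rpow_add hs.1 θ]; ring]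
  exact ⟨_, eventually_of_mem (Ioc_mem_nhdsGT hs.1) <|
    hu.le_two_mul_of_rpow_mul_le hs.1 hs.2 hp.le hμ hk hC hθ hθ0 hθN hα hν
      (fun t ht => (hsKfu t ht).1) (fun t ht => (hsKfu t ht).2.1) hflux hc hcB hcA
      (fun t ht => (hsKfu t ht).2.2) hRs'⟩

end Solution

theorem stmt7_general (N : ℕ) (p μ α k0 r1 : ℝ) (K f u : ℝ → ℝ)
    (hp1 : 1 < p) (hμ : 0 ≤ μ)
    (hK : CondK0 K α k0) (hf : CondF0 f)
    (hθ : θconst p α < (N : ℝ) - 2)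
    (hr1 : 0 < r1)
    (hu : SolOn N p μ K f u (Ioo 0 r1))
    (hsing : Tendsto u (𝓝[>] 0) atTop) :
    ∃ c : ℝ, 0 < c ∧ ∃ᶠ r in 𝓝[>] (0 : ℝ), c < r ^ θconst p α * u r := by
  obtain ⟨hKpos, -, hα, hk0, hKlim⟩ := hK
  obtain ⟨-, -, -, ν, hν, C, hC, ρ0, hρ0, hfC⟩ := hf
  have hθp : θconst p α * (p - 1) = 2 + α := div_mul_cancel₀ _ (by linarith)
  have hθ0 : 0 < θconst p α := div_pos (by linarith) (by linarith)
  by_contra hsmall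
  push Not at hsmall
  by_cases hflux : ∀ ε > 0, ∃ᶠ t in 𝓝[>] 0, -ε ≤ radialFlux N u t
  · have hKle : ∀ᶠ t in 𝓝[>] 0, 0 ≤ K t ∧ K t ≤ 2 * k0 * t ^ α :=
      (eventually_le_mul_rpow_of_tendsto hKlim (by linarith)).and self_mem_nhdsWithin
        |>.mono fun t ht => ⟨(hKpos t ht.2).le, ht.1⟩
    have hfle : ∀ᶠ t in 𝓝[>] 0, f t ≤ C * t ^ ν :=
      eventually_of_mem (Ioo_mem_nhdsGT hρ0) fun t ht => hfC t ht.1 ht.2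
    obtain ⟨M, hM⟩ := hu.exists_eventually_le_of_radialFlux hr1 hp1 hμ (by linarith) hC.le hθp
      hθ0 hθ hα hν hKle hfle hsmall hflux
    obtain ⟨r, hr, hrM⟩ := ((hsing.eventually (eventually_gt_atTop M)).and hM).exists
    exact hr.not_ge hrM
  · push Not at hflux
    obtain ⟨ε, hε, hw⟩ := hflux
    have hblow := tendsto_rpow_mul_atTop_of_radialFlux_le hθ0 hθ hε
      ((hw.and (Ioo_mem_nhdsGT hr1)).mono fun t ht => ⟨hu.hasDerivAt ht.2, ht.1.le⟩)
    obtain ⟨r, hr, hr'⟩ :=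
      ((hblow.eventually (eventually_gt_atTop 1)).and (hsmall 1 one_pos)).exists
    exact hr.not_ge hr'

/-- Lemma 2.1 (ii): for a singular solution,
`limsup_{r→0+} r^θ u(r) > 0`. -/
theorem stmt7 (N : ℕ) (p μ α k0 r1 : ℝ) (K f u : ℝ → ℝ)
    (hN : 3 ≤ N) (hp1 : 1 < p) (hμ : 0 ≤ μ)
    (hK : CondK0 K α k0) (hf : CondF0 f)
    (hθ : θconst p α < (N : ℝ) - 2)
    (hr1 : 0 < r1)
    (hu : SolOn N p μ K f u (Ioo 0 r1))
    (hsing : Tendsto u (𝓝[>] 0) atTop) :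
    ∃ c : ℝ, 0 < c ∧ ∃ᶠ r in 𝓝[>] (0 : ℝ), c < r ^ θconst p α * u r :=
  stmt7_general N p μ α k0 r1 K f u hp1 hμ hK hf hθ hr1 hu hsing
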